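/- arXiv:1702.04200 — 2 statements merged into one kernel-verified Lean document; each statement's English description precedes it below -/
import Mathlib

section
/- For x ∈ Z_p, the Volkenborn integral ρ_p(x) := ∫_{Z_p} (x+t)·χ(x+t) dt equals x - ⌈x/p⌉, where ⌈x/p⌉ is the p-adic limit of ⌈x_n/p⌉ over natural numbers x_n → x, and χ is the characteristic function of {y ∈ C_p : |y|_p ≥ 1}. -/
/-!
Let `a ∈ {0, …, p-1}` be the residue with `p ∣ z + a`. Then `|x + j| ≥ 1` fails exactly for
`j ≡ a (mod p)`, so the Riemann sums of `ρ_p(x)` are those of `t ↦ x + t` minus those of the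
class `a + pℤ_p`, which rescale to the Riemann sums of `t ↦ (x + a)/p + t` one level down.
Since `∫ (y + t) dt = y - 1/2` for every `y`, we get `ρ_p(x) = x - (x + a)/p`. On the other
side, `p ⌈u/p⌉ = u + a` for naturals `u ≡ z (mod p)`, so Dwork's `⌈x/p⌉` is `(x + a)/p` too.
-/

open Filter Finset Topology

theorem Finset.sum_range_mul_ite_mod_eq {M : Type*} [AddCommMonoid M] {p a : ℕ} (ha : a < p)
    (f : ℕ → M) (N : ℕ) :
    ∑ j ∈ range (p * N), (if j % p = a then f j else 0) = ∑ k ∈ range N, f (p * k + a) := by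
  induction N with
  | zero => simp
  | succ N ih =>
    rw [mul_add_one, sum_range_add, ih, sum_range_succ]
    congr 1
    rw [sum_congr rfl fun b hb => by rw [Nat.mul_add_mod, Nat.mod_eq_of_lt (mem_range.1 hb)]]
    simp [ha]

theorem sum_range_add_natCast {K : Type*} [Field K] [CharZero K] (y : K) (N : ℕ) :
    ∑ j ∈ range N, (y + j) = N * (y + (N - 1) / 2) := by
  induction N with
  | zero => simp
  | succ N ih => rw [sum_range_succ, ih]; push_cast; ring

theorem Int.natCast_mul_ceil_div {p : ℕ} [NeZero p] (m : ℕ) :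
    (p : ℤ) * ⌈(m : ℚ) / p⌉ = m + (-(m : ZMod p)).val := by
  have h := Int.emod_add_mul_ediv (-(m : ℤ)) p
  rw [Rat.ceil_natCast_div_natCast,
    show -(m : ZMod p) = ((-(m : ℤ) : ℤ) : ZMod p) by push_cast; rfl, ZMod.val_intCast]
  linarith

namespace PadicInt
variable {p : ℕ} [Fact p.Prime]

theorem tendsto_appr (z : ℤ_[p]) : Tendsto (fun n => (z.appr n : ℤ_[p])) atTop (𝓝 z) := by
  rw [tendsto_iff_norm_sub_tendsto_zero]
  refine squeeze_zero_norm' (Eventually.of_forall fun n => ?_)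
    (tendsto_pow_atTop_nhds_zero_of_lt_one (norm_nonneg _)
      ((norm_lt_one_iff_dvd (p : ℤ_[p])).2 dvd_rfl))
  rw [norm_sub_rev, norm_norm, ← norm_pow, norm_p_pow, norm_le_pow_iff_mem_span_pow]
  exact appr_spec n z

theorem toZMod_eq_zero_iff (w : ℤ_[p]) : toZMod w = 0 ↔ ‖w‖ < 1 := by
  rw [← RingHom.mem_ker, ker_toZMod, IsLocalRing.mem_maximalIdeal, mem_nonunits]

theorem eventually_toZMod_eq {u : ℕ → ℤ_[p]} {z : ℤ_[p]} (hu : Tendsto u atTop (𝓝 z)) :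
    ∀ᶠ n in atTop, toZMod (u n) = toZMod z := by
  filter_upwards [hu (Metric.ball_mem_nhds z one_pos)] with n hn
  rw [← sub_eq_zero, ← map_sub, toZMod_eq_zero_iff, ← dist_eq_norm]
  exact hn

theorem norm_add_natCast_lt_one_iff (z : ℤ_[p]) (j : ℕ) :
    ‖z + j‖ < 1 ↔ j % p = (-toZMod z).val := by
  rw [← toZMod_eq_zero_iff, map_add, map_natCast, add_eq_zero_iff_eq_neg',
    ← Nat.mod_eq_of_lt (ZMod.val_lt (-toZMod z)), ← ZMod.natCast_eq_natCast_iff',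
    ZMod.natCast_zmod_val]

theorem natCast_mul_eq_of_tendsto_ceil {z c : ℤ_[p]} {u : ℕ → ℕ}
    (hu : Tendsto (fun n => (u n : ℤ_[p])) atTop (𝓝 z))
    (hc : Tendsto (fun n => ((⌈(u n : ℚ) / p⌉ : ℤ) : ℤ_[p])) atTop (𝓝 c)) :
    (p : ℤ_[p]) * c = z + (-toZMod z).val := by
  refine tendsto_nhds_unique ((hc.const_mul _).congr' ?_) (hu.add_const _)
  filter_upwards [eventually_toZMod_eq hu] with n hn
  rw [← hn, map_natCast]
  have h := congrArg (Int.cast : ℤ → ℤ_[p]) (Int.natCast_mul_ceil_div (p := p) (u n))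
  simpa only [Int.cast_mul, Int.cast_add, Int.cast_natCast] using h

end PadicInt

section VolkenbornSum
variable {K : Type*} (p : ℕ)

def volkenbornSum [Field K] (f : ℕ → K) (n : ℕ) : K :=
  ((p : K) ^ n)⁻¹ * ∑ j ∈ range (p ^ n), f j

variable {p}

theorem volkenbornSum_add_natCast [Field K] [CharZero K] [NeZero p] (y : K) (n : ℕ) :
    volkenbornSum p (fun j => y + j) n = y + ((p : K) ^ n - 1) / 2 := by
  have hp : (p : K) ≠ 0 := Nat.cast_ne_zero.2 (NeZero.ne p)
  rw [volkenbornSum, sum_range_add_natCast]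
  push_cast
  field_simp

theorem volkenbornSum_succ_ite_mod_eq [Field K] [CharZero K] [NeZero p] {a : ℕ} (ha : a < p)
    (y : K) (n : ℕ) :
    volkenbornSum p (fun j => if j % p = a then y + j else 0) (n + 1) =
      volkenbornSum p (fun k => (y + a) / p + k) n := by
  have hp : (p : K) ≠ 0 := Nat.cast_ne_zero.2 (NeZero.ne p)
  rw [volkenbornSum, volkenbornSum, pow_succ', pow_succ', sum_range_mul_ite_mod_eq ha,
    mul_inv_rev, mul_assoc, mul_sum]
  congr 1
  refine sum_congr rfl fun (k : ℕ) _ => ?_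
  push_cast
  field_simp
  ring

theorem tendsto_volkenbornSum_add_natCast [NormedField K] [CharZero K] [NeZero p]
    (hp : ‖(p : K)‖ < 1) (y : K) :
    Tendsto (volkenbornSum p fun j => y + j) atTop (𝓝 (y - 1 / 2)) := by
  rw [funext (volkenbornSum_add_natCast (p := p) y), show y - 1 / 2 = y + (0 - 1) / 2 by ring]
  exact (((tendsto_pow_atTop_nhds_zero_of_norm_lt_one hp).sub_const 1).div_const 2).const_add y

theorem tendsto_volkenbornSum_ite_mod_ne [NormedField K] [CharZero K] [NeZero p]
    (hp : ‖(p : K)‖ < 1) {a : ℕ} (ha : a < p) (y : K) :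
    Tendsto (volkenbornSum p fun j => if j % p = a then 0 else y + j) atTop
      (𝓝 (y - (y + a) / p)) := by
  have hsplit : ∀ n, volkenbornSum p (fun j => if j % p = a then 0 else y + j) (n + 1) =
      volkenbornSum p (fun j => y + j) (n + 1) -
        volkenbornSum p (fun k => (y + a) / p + k) n := by
    intro n
    rw [← volkenbornSum_succ_ite_mod_eq ha, volkenbornSum, volkenbornSum, volkenbornSum,
      ← mul_sub, ← sum_sub_distrib]
    congr 2 with j
    by_cases h : j % p = a <;> simp [h]
  rw [← tendsto_add_atTop_iff_nat 1,
    show y - (y + a) / p = (y - 1 / 2) - ((y + a) / p - 1 / 2) by ring]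
  exact (((tendsto_volkenbornSum_add_natCast hp y).comp (tendsto_add_atTop_nat 1)).sub
    (tendsto_volkenbornSum_add_natCast hp _)).congr fun n => (hsplit n).symm

end VolkenbornSum

theorem rho_p_on_Zp_general (p : ℕ) [Fact p.Prime] (K : Type*)
    [NontriviallyNormedField K]
    [Algebra ℚ_[p] K] (hiso : ∀ q : ℚ_[p], ‖algebraMap ℚ_[p] K q‖ = ‖q‖)
    (z : ℤ_[p]) (x : K) (hx : x = algebraMap ℚ_[p] K (z : ℚ_[p]))
    (c : ℤ_[p])
    (hc : ∀ u : ℕ → ℕ,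
      Tendsto (fun n : ℕ => ((u n : ℤ_[p]))) atTop (nhds z) →
      Tendsto (fun n : ℕ => ((⌈(u n : ℚ) / (p : ℚ)⌉ : ℤ) : ℤ_[p])) atTop (nhds c)) :
    Tendsto (fun n : ℕ => ((p : K) ^ n)⁻¹ * ∑ j ∈ Finset.range (p ^ n),
        (if 1 ≤ ‖x + (j : K)‖ then x + (j : K) else 0))
      atTop (nhds (x - algebraMap ℚ_[p] K (c : ℚ_[p]))) := by
  have : CharZero K := charZero_of_injective_algebraMap (algebraMap ℚ_[p] K).injective
  set a := (-PadicInt.toZMod z).val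
  have hp : ‖(p : K)‖ < 1 := by
    rw [← map_natCast (algebraMap ℚ_[p] K), hiso]
    exact Padic.norm_p_lt_one
  have hχ : ∀ j : ℕ, 1 ≤ ‖x + j‖ ↔ ¬ j % p = a := fun j => by
    rw [← PadicInt.norm_add_natCast_lt_one_iff, not_lt, hx, ← map_natCast (algebraMap ℚ_[p] K),
      ← map_add, hiso, ← PadicInt.padic_norm_e_of_padicInt]
    push_cast
    rfl
  have hu := PadicInt.tendsto_appr z
  have hpc := PadicInt.natCast_mul_eq_of_tendsto_ceil hu (hc _ hu)
  have hc' : algebraMap ℚ_[p] K c = (x + a) / p := by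
    rw [eq_div_iff (by exact_mod_cast (NeZero.ne p)), hx, mul_comm]
    simpa only [PadicInt.coe_mul, PadicInt.coe_add, PadicInt.coe_natCast, map_mul, map_add,
      map_natCast] using congrArg (fun w : ℤ_[p] => algebraMap ℚ_[p] K w) hpc
  simp_rw [hχ, ite_not, hc']
  exact tendsto_volkenbornSum_ite_mod_ne hp (ZMod.val_lt _) x

/-- For `x ∈ ℤ_p`, the Volkenborn integral `ρ_p(x) = ∫_{ℤ_p} (x+t) χ(x+t) dt` equals
`x - ⌈x/p⌉`, where `⌈x/p⌉ ∈ ℤ_p` is the `p`-adic limit of `⌈x_n/p⌉` over natural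
numbers `x_n → x` (Dwork's shift map). -/
theorem rho_p_on_Zp (p : ℕ) [Fact p.Prime] (K : Type*)
    [NontriviallyNormedField K] [CompleteSpace K] [IsAlgClosed K] [IsUltrametricDist K]
    [Algebra ℚ_[p] K] (hiso : ∀ q : ℚ_[p], ‖algebraMap ℚ_[p] K q‖ = ‖q‖)
    (z : ℤ_[p]) (x : K) (hx : x = algebraMap ℚ_[p] K (z : ℚ_[p]))
    (c : ℤ_[p])
    (hc : ∀ u : ℕ → ℕ,
      Tendsto (fun n : ℕ => ((u n : ℤ_[p]))) atTop (nhds z) →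
      Tendsto (fun n : ℕ => ((⌈(u n : ℚ) / (p : ℚ)⌉ : ℤ) : ℤ_[p])) atTop (nhds c)) :
    Tendsto (fun n : ℕ => ((p : K) ^ n)⁻¹ * ∑ j ∈ Finset.range (p ^ n),
        (if 1 ≤ ‖x + (j : K)‖ then x + (j : K) else 0))
      atTop (nhds (x - algebraMap ℚ_[p] K (c : ℚ_[p]))) :=
  rho_p_on_Zp_general p K hiso z x hx c hc
end

section
/- (Distribution formula for Diamond's log-gamma on W_p.) Let x ∈ C_p with |x|_p > 1, or |x|_p ≤ 1 and residue not in F_p. Then for every positive integer n, ∑_{k=0}^{n-1} G_p((x+k)/n) = G_p(x) - (x - 1/2)·log_p(n), where G_p(x) = ∫_{Z_p} (x+t)(log_p(x+t)-1) dt is Diamond's p-adic log-gamma function. -/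
/-!
Write `f w = w (log w - 1)`. Reindexing `j ↦ n j + k` and using
`f (u / n) = f u / n - log n · u / n` turns `∑ₖ` of the level-`m` Riemann sums of `f` at
`(x + k) / n` into the Riemann sum of `f (x + ·)` over `[0, n pᵐ)` minus
`log n · (x + (n pᵐ - 1) / 2)`, and the latter tends to `log n · (x - 1/2)` since `pᵐ → 0`.
Cutting `[0, n pᵐ)` into `n` blocks of length `pᵐ`, the block starting at `pᵐ a` differs from the
level-`m` Riemann sum at `x` by `a · ∑_{j < pᵐ} log (x + j)` up to `O(p⁻ᵐ)` (second-order
expansion of `f`), and `∑_{j < pᵐ} log (x + j) → 0` because passing from `m` to `m + 1`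
multiplies it by `p` up to `O(p⁻ᵐ)`. So the Riemann sums over `[0, n pᵐ)` still converge to `G x`.
-/

open Filter Finset Topology

section DistributionFormula

variable {K : Type*} [NontriviallyNormedField K]

/-- The Volkenborn integral `∫_{ℤ_p} g` is the limit of `riemannSum g (p ^ m)`. -/
def riemannSum (g : K → K) (N : ℕ) : K := (N : K)⁻¹ * ∑ j ∈ range N, g j

def mulLogSub (logp : K → K) (w : K) : K := w * (logp w - 1)

structure IsPAdicLog (logp : K → K) : Prop where
  map_mul : ∀ x y : K, x ≠ 0 → y ≠ 0 → logp (x * y) = logp x + logp y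
  hasSum : ∀ x : K, ‖x - 1‖ < 1 →
    HasSum (fun n : ℕ => (-1) ^ n * (x - 1) ^ (n + 1) / (n + 1 : K)) (logp x)

theorem Finset.sum_range_mul_eq_sum_sum {M : Type*} [AddCommMonoid M] (g : ℕ → M) (a b : ℕ) :
    ∑ i ∈ range (a * b), g i = ∑ j ∈ range b, ∑ k ∈ range a, g (a * j + k) := by
  induction b with
  | zero => simp
  | succ b ih => rw [Nat.mul_succ, sum_range_add, ih, sum_range_succ]

theorem riemannSum_mul (g : K → K) (N n : ℕ) :
    riemannSum g (N * n) = (n : K)⁻¹ * ∑ a ∈ range n, riemannSum (fun t => g (N * a + t)) N := by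
  simp only [riemannSum, sum_range_mul_eq_sum_sum, ← mul_sum, Nat.cast_mul, Nat.cast_add, mul_inv]
  ring

theorem sum_riemannSum_add_div [CharZero K] (g : K → K) (x : K) (N : ℕ) {n : ℕ} (hn : n ≠ 0) :
    ∑ k ∈ range n, riemannSum (fun t => g ((x + k) / n + t)) N
      = n * riemannSum (fun t => g ((x + t) / n)) (N * n) := by
  have hn' : (n : K) ≠ 0 := Nat.cast_ne_zero.mpr hn
  have hpt : ∀ j k : ℕ, (x + k) / n + j = (x + ((n * j + k : ℕ) : K)) / n := fun j k => by
    push_cast; field_simp; ring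
  simp only [riemannSum, ← mul_sum, mul_comm N n, sum_range_mul_eq_sum_sum, hpt, Nat.cast_mul,
    mul_inv, ← mul_assoc, mul_inv_cancel₀ hn', one_mul]
  rw [sum_comm]

theorem riemannSum_const_add_id [CharZero K] (x : K) {N : ℕ} (hN : N ≠ 0) :
    riemannSum (fun t => x + t) N = x + ((N : K) - 1) / 2 := by
  have hgauss : (∑ i ∈ range N, (i : K)) * 2 = N * ((N : K) - 1) := by
    have := congrArg (Nat.cast (R := K)) (sum_range_id_mul_two N)
    push_cast [Nat.cast_sub (Nat.one_le_iff_ne_zero.mpr hN)] at this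
    exact this
  have hN' : (N : K) ≠ 0 := Nat.cast_ne_zero.mpr hN
  rw [riemannSum, sum_add_distrib, sum_const, card_range, nsmul_eq_mul]
  field_simp
  linear_combination hgauss

theorem tendsto_zero_of_norm_succ_le_max {E : Type*} [SeminormedAddCommGroup E] {u : ℕ → E}
    {r : ℝ} (hr0 : 0 ≤ r) (hr1 : r < 1) (h : ∀ m, ‖u (m + 1)‖ ≤ max (r * ‖u m‖) (r ^ (m + 1))) :
    Tendsto u atTop (𝓝 0) := by
  set M := max ‖u 0‖ 1
  have hbound : ∀ m, ‖u m‖ ≤ M * r ^ m := by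
    intro m
    induction m with
    | zero => simp [M]
    | succ m ih =>
      refine (h m).trans (max_le ?_ ?_)
      · calc r * ‖u m‖ ≤ r * (M * r ^ m) := by gcongr
          _ = M * r ^ (m + 1) := by ring
      · exact le_mul_of_one_le_left (by positivity) (le_max_right _ _)
  refine squeeze_zero_norm hbound ?_
  simpa using (tendsto_pow_atTop_nhds_zero_of_lt_one hr0 hr1).const_mul M

theorem forall_one_le_norm_sub_intCast_iff [IsUltrametricDist K] {w : K} :
    (∀ n : ℤ, 1 ≤ ‖w - n‖) ↔ 1 < ‖w‖ ∨ (‖w‖ ≤ 1 ∧ ∀ n : ℤ, 1 ≤ ‖w - n‖) := by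
  refine ⟨fun h => (le_or_gt ‖w‖ 1).elim (fun hw => .inr ⟨hw, h⟩) .inl, ?_⟩
  rintro (hw | ⟨-, h⟩) n
  · have hn := IsUltrametricDist.norm_intCast_le_one K n
    rw [sub_eq_add_neg,
      IsUltrametricDist.norm_add_eq_max_of_norm_ne_norm (by rw [norm_neg]; linarith)]
    exact le_max_of_le_left hw.le
  · exact h n

theorem one_le_norm_add_div_sub_intCast [IsUltrametricDist K] {x : K}
    (hx : ∀ m : ℤ, 1 ≤ ‖x - m‖) (k : ℕ) {n : ℕ} (hn : (n : K) ≠ 0) (m : ℤ) :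
    1 ≤ ‖(x + k) / n - m‖ := by
  have hpt : (x + k) / n - m = (x - ((m * n - k : ℤ) : K)) / n := by push_cast; field_simp; ring
  rw [hpt, norm_div]
  exact (hx _).trans (le_div_self (norm_nonneg _) (norm_pos_iff.mpr hn)
    (IsUltrametricDist.norm_natCast_le_one K n))

namespace IsPAdicLog

variable {logp : K → K}

theorem add_eq (hlog : IsPAdicLog logp) {u ε : K} (hu : u ≠ 0) (hεu : ‖ε‖ < ‖u‖) :
    logp (u + ε) = logp u + logp (1 + ε / u) := by
  have hεu' : ‖ε / u‖ < 1 := by rwa [norm_div, div_lt_one (norm_pos_iff.mpr hu)]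
  have h1 : 1 + ε / u ≠ 0 := fun h => by
    rw [eq_neg_of_add_eq_zero_right h, norm_neg, norm_one] at hεu'
    exact lt_irrefl _ hεu'
  rw [← hlog.map_mul _ _ hu h1]
  congr 1
  field_simp

theorem mulLogSub_div (hlog : IsPAdicLog logp) {u c : K} (hu : u ≠ 0) (hc : c ≠ 0) :
    mulLogSub logp (u / c) = mulLogSub logp u / c - logp c * (u / c) := by
  have hlogu : logp u = logp (u / c) + logp c := by
    rw [← hlog.map_mul _ _ (div_ne_zero hu hc) hc, div_mul_cancel₀ _ hc]
  rw [mulLogSub, mulLogSub, hlogu]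
  ring

theorem sum_riemannSum_mulLogSub_add_div [CharZero K] (hlog : IsPAdicLog logp) {x : K}
    (hx : ∀ j : ℕ, x + j ≠ 0) {n N : ℕ} (hn : n ≠ 0) (hN : N ≠ 0) :
    ∑ k ∈ range n, riemannSum (fun t => mulLogSub logp ((x + k) / n + t)) N
      = riemannSum (fun t => mulLogSub logp (x + t)) (N * n)
        - logp n * (x + (((N * n : ℕ) : K) - 1) / 2) := by
  have hn' : (n : K) ≠ 0 := Nat.cast_ne_zero.mpr hn
  rw [sum_riemannSum_add_div _ _ _ hn, ← riemannSum_const_add_id x (mul_ne_zero hN hn)]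
  simp only [riemannSum]
  rw [sum_congr rfl fun j _ => hlog.mulLogSub_div (hx j) hn', sum_sub_distrib, ← sum_div,
    ← mul_sum, ← sum_div]
  field_simp

end IsPAdicLog

section Padic

variable {p : ℕ} [hp : Fact p.Prime] [Algebra ℚ_[p] K]

theorem inv_natCast_prime_lt_one : (p : ℝ)⁻¹ < 1 :=
  inv_lt_one_of_one_lt₀ (mod_cast hp.out.one_lt)

theorem norm_natCast_prime (hiso : ∀ q : ℚ_[p], ‖algebraMap ℚ_[p] K q‖ = ‖q‖) :
    ‖(p : K)‖ = (p : ℝ)⁻¹ := by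
  rw [← map_natCast (algebraMap ℚ_[p] K), hiso, Padic.norm_p]

theorem norm_natCast_prime_pow_mul_le [IsUltrametricDist K]
    (hiso : ∀ q : ℚ_[p], ‖algebraMap ℚ_[p] K q‖ = ‖q‖) (m a : ℕ) :
    ‖(p : K) ^ m * a‖ ≤ (p : ℝ)⁻¹ ^ m := by
  rw [norm_mul, norm_pow, norm_natCast_prime hiso]
  exact mul_le_of_le_one_right (by positivity) (IsUltrametricDist.norm_natCast_le_one K a)

theorem inv_le_norm_natCast (hiso : ∀ q : ℚ_[p], ‖algebraMap ℚ_[p] K q‖ = ‖q‖) {k : ℕ}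
    (hk : k ≠ 0) : (k : ℝ)⁻¹ ≤ ‖(k : K)‖ := by
  rw [← map_natCast (algebraMap ℚ_[p] K), hiso,
    Padic.norm_eq_zpow_neg_valuation (Nat.cast_ne_zero.mpr hk), Padic.valuation_natCast,
    zpow_neg, zpow_natCast]
  exact inv_anti₀ (by have := hp.out.pos; positivity)
    (by exact_mod_cast Nat.le_of_dvd (Nat.pos_of_ne_zero hk) pow_padicValNat_dvd)

theorem norm_logSeries_term_le (hiso : ∀ q : ℚ_[p], ‖algebraMap ℚ_[p] K q‖ = ‖q‖) (z : K)
    (i : ℕ) : ‖(-1) ^ i * z ^ (i + 1) / ((i : K) + 1)‖ ≤ ‖z‖ * (p * ‖z‖) ^ i := by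
  have hi : ((i + 1 : ℕ) : ℝ)⁻¹ ≤ ‖((i + 1 : ℕ) : K)‖ := inv_le_norm_natCast hiso i.succ_ne_zero
  have hpow : ((i + 1 : ℕ) : ℝ) ≤ (p : ℝ) ^ i := by
    exact_mod_cast Nat.lt_pow_self hp.out.one_lt
  push_cast at hi hpow
  simp only [norm_div, norm_mul, norm_pow, norm_neg, norm_one, one_pow, one_mul]
  rw [div_le_iff₀ ((inv_pos.mpr (by positivity)).trans_le hi)]
  calc ‖z‖ ^ (i + 1) = ((i : ℝ) + 1) * ‖z‖ ^ (i + 1) * ((i : ℝ) + 1)⁻¹ := by field_simp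
    _ ≤ (p : ℝ) ^ i * ‖z‖ ^ (i + 1) * ‖(i : K) + 1‖ := by gcongr
    _ = ‖z‖ * (p * ‖z‖) ^ i * ‖(i : K) + 1‖ := by ring

namespace IsPAdicLog

variable [IsUltrametricDist K] {logp : K → K}

theorem norm_tail_le (hlog : IsPAdicLog logp)
    (hiso : ∀ q : ℚ_[p], ‖algebraMap ℚ_[p] K q‖ = ‖q‖) {z : K} (hz : ‖z‖ ≤ (p : ℝ)⁻¹) (k : ℕ) :
    ‖logp (1 + z) - ∑ i ∈ range k, (-1) ^ i * z ^ (i + 1) / ((i : K) + 1)‖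
      ≤ ‖z‖ * (p * ‖z‖) ^ k := by
  have hpz : p * ‖z‖ ≤ 1 := by
    rwa [← le_div_iff₀' (by exact_mod_cast hp.out.pos), one_div]
  have hsum := hlog.hasSum (1 + z) (by
    rw [add_sub_cancel_left]; exact hz.trans_lt inv_natCast_prime_lt_one)
  simp only [add_sub_cancel_left] at hsum
  rw [← ((hasSum_nat_add_iff' k).mpr hsum).tsum_eq]
  refine IsUltrametricDist.norm_tsum_le_of_forall_le_of_nonneg (by positivity) fun i => ?_
  refine (norm_logSeries_term_le hiso z (i + k)).trans ?_
  rw [pow_add]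
  gcongr
  exact mul_le_of_le_one_left (by positivity) (pow_le_one₀ (by positivity) hpz)

theorem norm_le (hlog : IsPAdicLog logp)
    (hiso : ∀ q : ℚ_[p], ‖algebraMap ℚ_[p] K q‖ = ‖q‖) {z : K} (hz : ‖z‖ ≤ (p : ℝ)⁻¹) :
    ‖logp (1 + z)‖ ≤ ‖z‖ := by
  simpa using hlog.norm_tail_le hiso hz 0

theorem norm_sub_le (hlog : IsPAdicLog logp)
    (hiso : ∀ q : ℚ_[p], ‖algebraMap ℚ_[p] K q‖ = ‖q‖) {z : K} (hz : ‖z‖ ≤ (p : ℝ)⁻¹) :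
    ‖logp (1 + z) - z‖ ≤ p * ‖z‖ ^ 2 := by
  simpa [sq, mul_left_comm] using hlog.norm_tail_le hiso hz 1

theorem norm_add_sub_le (hlog : IsPAdicLog logp)
    (hiso : ∀ q : ℚ_[p], ‖algebraMap ℚ_[p] K q‖ = ‖q‖) {u ε : K} (hu : 1 ≤ ‖u‖)
    (hε : ‖ε‖ ≤ (p : ℝ)⁻¹) : ‖logp (u + ε) - logp u‖ ≤ ‖ε‖ := by
  have hεu : ‖ε / u‖ ≤ ‖ε‖ := by rw [norm_div]; exact div_le_self (norm_nonneg _) hu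
  rw [hlog.add_eq (norm_pos_iff.mp (one_pos.trans_le hu))
    ((hε.trans_lt inv_natCast_prime_lt_one).trans_le hu), add_sub_cancel_left]
  exact (hlog.norm_le hiso (hεu.trans hε)).trans hεu

theorem norm_mulLogSub_add_sub_le (hlog : IsPAdicLog logp)
    (hiso : ∀ q : ℚ_[p], ‖algebraMap ℚ_[p] K q‖ = ‖q‖) {u ε : K} (hu : 1 ≤ ‖u‖)
    (hε : ‖ε‖ ≤ (p : ℝ)⁻¹) :
    ‖mulLogSub logp (u + ε) - mulLogSub logp u - ε * logp u‖ ≤ p * ‖ε‖ ^ 2 := by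
  have hp1 : (1 : ℝ) ≤ p := by exact_mod_cast hp.out.one_le
  have hu0 : u ≠ 0 := norm_pos_iff.mp (one_pos.trans_le hu)
  set z := ε / u
  have huz : ‖u‖ * ‖z‖ = ‖ε‖ := by rw [norm_div]; field_simp
  have hz : ‖z‖ ≤ ‖ε‖ := by rw [norm_div]; exact div_le_self (norm_nonneg _) hu
  have hz' : ‖z‖ ≤ (p : ℝ)⁻¹ := hz.trans hε
  have hdecomp : mulLogSub logp (u + ε) - mulLogSub logp u - ε * logp u
      = u * (logp (1 + z) - z) + ε * logp (1 + z) := by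
    have huz' : u * z = ε := mul_div_cancel₀ ε hu0
    rw [mulLogSub, mulLogSub,
      hlog.add_eq hu0 ((hε.trans_lt inv_natCast_prime_lt_one).trans_le hu)]
    linear_combination huz'
  rw [hdecomp]
  refine (IsUltrametricDist.norm_add_le_max _ _).trans (max_le ?_ ?_)
  · calc ‖u * (logp (1 + z) - z)‖ ≤ ‖u‖ * (p * ‖z‖ ^ 2) := by
          rw [norm_mul]; gcongr; exact hlog.norm_sub_le hiso hz'
      _ = p * (‖u‖ * ‖z‖) * ‖z‖ := by ring
      _ ≤ p * ‖ε‖ ^ 2 := by rw [huz, sq, ← mul_assoc]; gcongr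
  · calc ‖ε * logp (1 + z)‖ ≤ ‖ε‖ * ‖ε‖ := by
          rw [norm_mul]; gcongr; exact (hlog.norm_le hiso hz').trans hz
      _ ≤ p * ‖ε‖ ^ 2 := by rw [← sq]; exact le_mul_of_one_le_left (by positivity) hp1

theorem norm_sum_log_pow_succ_le (hlog : IsPAdicLog logp)
    (hiso : ∀ q : ℚ_[p], ‖algebraMap ℚ_[p] K q‖ = ‖q‖) {w : K} (hw : ∀ j : ℕ, 1 ≤ ‖w + j‖)
    {m : ℕ} (hm : m ≠ 0) :
    ‖∑ j ∈ range (p ^ (m + 1)), logp (w + j)‖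
      ≤ max ((p : ℝ)⁻¹ * ‖∑ j ∈ range (p ^ m), logp (w + j)‖) ((p : ℝ)⁻¹ ^ m) := by
  have hsmall : ∀ a b : ℕ,
      ‖logp (w + b + (p : K) ^ m * a) - logp (w + b)‖ ≤ (p : ℝ)⁻¹ ^ m := by
    intro a b
    have hε := norm_natCast_prime_pow_mul_le hiso m a
    exact (hlog.norm_add_sub_le hiso (hw b)
      (hε.trans (pow_le_of_le_one (by positivity) inv_natCast_prime_lt_one.le hm))).trans hε
  have hsplit : ∑ j ∈ range (p ^ (m + 1)), logp (w + j)
      = p * ∑ j ∈ range (p ^ m), logp (w + j)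
        + ∑ a ∈ range p, ∑ b ∈ range (p ^ m), (logp (w + b + (p : K) ^ m * a) - logp (w + b)) := by
    rw [pow_succ, sum_range_mul_eq_sum_sum]
    simp only [sum_sub_distrib, sum_const, card_range, nsmul_eq_mul]
    push_cast
    ring_nf
  rw [hsplit]
  refine (IsUltrametricDist.norm_add_le_max _ _).trans (max_le_max ?_ ?_)
  · rw [norm_mul, norm_natCast_prime hiso]
  · exact IsUltrametricDist.norm_sum_le_of_forall_le_of_nonneg (by positivity) fun a _ =>
      IsUltrametricDist.norm_sum_le_of_forall_le_of_nonneg (by positivity) fun b _ => hsmall a b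

theorem tendsto_sum_log_add_natCast (hlog : IsPAdicLog logp)
    (hiso : ∀ q : ℚ_[p], ‖algebraMap ℚ_[p] K q‖ = ‖q‖) {w : K} (hw : ∀ j : ℕ, 1 ≤ ‖w + j‖) :
    Tendsto (fun m => ∑ j ∈ range (p ^ m), logp (w + j)) atTop (𝓝 0) := by
  refine (tendsto_add_atTop_iff_nat 1).mp (tendsto_zero_of_norm_succ_le_max (r := (p : ℝ)⁻¹)
    (by positivity) inv_natCast_prime_lt_one fun m => ?_)
  exact hlog.norm_sum_log_pow_succ_le hiso hw m.succ_ne_zero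

theorem norm_riemannSum_shift_sub_sub_le [CharZero K] (hlog : IsPAdicLog logp)
    (hiso : ∀ q : ℚ_[p], ‖algebraMap ℚ_[p] K q‖ = ‖q‖) {w : K} (hw : ∀ j : ℕ, 1 ≤ ‖w + j‖)
    (a : ℕ) {m : ℕ} (hm : m ≠ 0) :
    ‖riemannSum (fun t => mulLogSub logp (w + ((p ^ m : ℕ) * a + t))) (p ^ m)
        - riemannSum (fun t => mulLogSub logp (w + t)) (p ^ m)
        - a * ∑ j ∈ range (p ^ m), logp (w + j)‖ ≤ p * (p : ℝ)⁻¹ ^ m := by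
  set ε : K := (p ^ m : ℕ) * a
  have hpm : ‖((p ^ m : ℕ) : K)‖ = (p : ℝ)⁻¹ ^ m := by
    rw [Nat.cast_pow, norm_pow, norm_natCast_prime hiso]
  have hpm0 : ((p ^ m : ℕ) : K) ≠ 0 := Nat.cast_ne_zero.mpr (pow_ne_zero m hp.out.ne_zero)
  have hε : ‖ε‖ ≤ (p : ℝ)⁻¹ ^ m := by
    simpa [ε] using norm_natCast_prime_pow_mul_le hiso m a
  have hε' : ‖ε‖ ≤ (p : ℝ)⁻¹ :=
    hε.trans (pow_le_of_le_one (by positivity) inv_natCast_prime_lt_one.le hm)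
  have hdecomp : riemannSum (fun t => mulLogSub logp (w + (ε + t))) (p ^ m)
        - riemannSum (fun t => mulLogSub logp (w + t)) (p ^ m)
        - a * ∑ j ∈ range (p ^ m), logp (w + j)
      = ((p ^ m : ℕ) : K)⁻¹ * ∑ j ∈ range (p ^ m),
          (mulLogSub logp (w + j + ε) - mulLogSub logp (w + j) - ε * logp (w + j)) := by
    simp only [riemannSum, sum_sub_distrib, ← mul_sum, ε]
    field_simp
    ring_nf
  rw [hdecomp, norm_mul, norm_inv, hpm]
  calc ((p : ℝ)⁻¹ ^ m)⁻¹ * ‖∑ j ∈ range (p ^ m),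
          (mulLogSub logp (w + j + ε) - mulLogSub logp (w + j) - ε * logp (w + j))‖
      ≤ ((p : ℝ)⁻¹ ^ m)⁻¹ * (p * ((p : ℝ)⁻¹ ^ m) ^ 2) := by
        gcongr
        refine IsUltrametricDist.norm_sum_le_of_forall_le_of_nonneg (by positivity) fun j _ => ?_
        refine (hlog.norm_mulLogSub_add_sub_le hiso (hw j) hε').trans ?_
        gcongr
    _ = p * (p : ℝ)⁻¹ ^ m := by field_simp

theorem tendsto_riemannSum_shift_sub [CharZero K] (hlog : IsPAdicLog logp)
    (hiso : ∀ q : ℚ_[p], ‖algebraMap ℚ_[p] K q‖ = ‖q‖) {w : K} (hw : ∀ j : ℕ, 1 ≤ ‖w + j‖)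
    (a : ℕ) :
    Tendsto (fun m => riemannSum (fun t => mulLogSub logp (w + ((p ^ m : ℕ) * a + t))) (p ^ m)
        - riemannSum (fun t => mulLogSub logp (w + t)) (p ^ m)) atTop (𝓝 0) := by
  have hmain : Tendsto (fun m => (a : K) * ∑ j ∈ range (p ^ m), logp (w + j)) atTop (𝓝 0) := by
    simpa using (hlog.tendsto_sum_log_add_natCast hiso hw).const_mul (a : K)
  have hbound : Tendsto (fun m : ℕ => (p : ℝ) * (p : ℝ)⁻¹ ^ m) atTop (𝓝 0) := by
    simpa using (tendsto_pow_atTop_nhds_zero_of_lt_one (by positivity)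
      inv_natCast_prime_lt_one).const_mul (p : ℝ)
  have herr := squeeze_zero_norm' ((eventually_ne_atTop 0).mono fun m hm =>
    hlog.norm_riemannSum_shift_sub_sub_le hiso hw a hm) hbound
  simpa using herr.add hmain

theorem tendsto_riemannSum_mul_of_tendsto [CharZero K] (hlog : IsPAdicLog logp)
    (hiso : ∀ q : ℚ_[p], ‖algebraMap ℚ_[p] K q‖ = ‖q‖) {w L : K} (hw : ∀ j : ℕ, 1 ≤ ‖w + j‖)
    (hL : Tendsto (fun m => riemannSum (fun t => mulLogSub logp (w + t)) (p ^ m)) atTop (𝓝 L))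
    {n : ℕ} (hn : n ≠ 0) :
    Tendsto (fun m => riemannSum (fun t => mulLogSub logp (w + t)) (p ^ m * n)) atTop (𝓝 L) := by
  have hshift : ∀ a : ℕ, Tendsto
      (fun m => riemannSum (fun t => mulLogSub logp (w + ((p ^ m : ℕ) * a + t))) (p ^ m))
      atTop (𝓝 L) := fun a => by
    simpa using (hlog.tendsto_riemannSum_shift_sub hiso hw a).add hL
  have hsum := (tendsto_finsetSum (range n) fun a _ => hshift a).const_mul (n : K)⁻¹
  rw [sum_const, card_range, nsmul_eq_mul,
    inv_mul_cancel_left₀ (Nat.cast_ne_zero.mpr hn : (n : K) ≠ 0)] at hsum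
  exact hsum.congr fun m => (riemannSum_mul _ _ _).symm

end IsPAdicLog

end Padic

end DistributionFormula

theorem diamond_distribution_on_Wp_general (p : ℕ) [Fact p.Prime] (K : Type*)
    [NontriviallyNormedField K] [IsUltrametricDist K]
    [Algebra ℚ_[p] K] (hiso : ∀ q : ℚ_[p], ‖algebraMap ℚ_[p] K q‖ = ‖q‖)
    (logp : K → K)
    (hlog_mul : ∀ x y : K, x ≠ 0 → y ≠ 0 → logp (x * y) = logp x + logp y)
    (hlog_series : ∀ x : K, ‖x - 1‖ < 1 →
      HasSum (fun n : ℕ => (-1) ^ n * (x - 1) ^ (n + 1) / (n + 1 : K)) (logp x))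
    (G : K → K)
    (hG : ∀ w : K, (1 < ‖w‖ ∨ (‖w‖ ≤ 1 ∧ ∀ n : ℤ, 1 ≤ ‖w - (n : K)‖)) →
      Tendsto (fun n : ℕ => ((p : K) ^ n)⁻¹ * ∑ j ∈ Finset.range (p ^ n),
          ((w + (j : K)) * (logp (w + (j : K)) - 1)))
        atTop (nhds (G w)))
    (x : K) (hx : 1 < ‖x‖ ∨ (‖x‖ ≤ 1 ∧ ∀ n : ℤ, 1 ≤ ‖x - (n : K)‖))
    (n : ℕ) (hn : 0 < n) :
    ∑ k ∈ Finset.range n, G ((x + (k : K)) / (n : K)) = G x - (x - 1 / 2) * logp (n : K) := by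
  have : CharZero K := charZero_of_injective_algebraMap (algebraMap ℚ_[p] K).injective
  have hlog : IsPAdicLog logp := ⟨hlog_mul, hlog_series⟩
  have hV : ∀ w : K, (∀ m : ℤ, 1 ≤ ‖w - m‖) →
      Tendsto (fun m => riemannSum (fun t => mulLogSub logp (w + t)) (p ^ m)) atTop (𝓝 (G w)) :=
    fun w hw => by
      simpa [riemannSum, mulLogSub] using hG w (forall_one_le_norm_sub_intCast_iff.mp hw)
  have hxW := forall_one_le_norm_sub_intCast_iff.mpr hx
  have hxN : ∀ j : ℕ, 1 ≤ ‖x + j‖ := fun j => by simpa using hxW (-j)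
  have hpm : Tendsto (fun m => ((p ^ m * n : ℕ) : K)) atTop (𝓝 0) := by
    have hp : ‖(p : K)‖ < 1 := (norm_natCast_prime hiso).trans_lt inv_natCast_prime_lt_one
    simpa using (tendsto_pow_atTop_nhds_zero_of_norm_lt_one hp).mul_const (n : K)
  have hleft := tendsto_finsetSum (range n) fun k _ =>
    hV _ (one_le_norm_add_div_sub_intCast hxW k (Nat.cast_ne_zero.mpr hn.ne'))
  have hright := ((hlog.tendsto_riemannSum_mul_of_tendsto hiso hxN (hV x hxW) hn.ne').sub
    (((hpm.sub_const 1).div_const 2).const_add x |>.const_mul (logp n)))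
  rw [← funext fun m => hlog.sum_riemannSum_mulLogSub_add_div
    (fun j => norm_pos_iff.mp (one_pos.trans_le (hxN j))) hn.ne'
    (pow_ne_zero m (Fact.out : p.Prime).ne_zero)] at hright
  rw [tendsto_nhds_unique hleft hright]
  ring

/-- Distribution formula for Diamond's `p`-adic log-gamma function
`G_p(x) = ∫_{ℤ_p} (x+t)(log_p(x+t)-1) dt` on `W_p`: for `x ∈ W_p` and `n ≥ 1`,
`∑_{k=0}^{n-1} G_p((x+k)/n) = G_p(x) - (x - 1/2) log_p(n)`. -/
theorem diamond_distribution_on_Wp (p : ℕ) [Fact p.Prime] (K : Type*)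
    [NontriviallyNormedField K] [CompleteSpace K] [IsAlgClosed K] [IsUltrametricDist K]
    [Algebra ℚ_[p] K] (hiso : ∀ q : ℚ_[p], ‖algebraMap ℚ_[p] K q‖ = ‖q‖)
    (logp : K → K)
    (hlog_an : ∀ x : K, x ≠ 0 → AnalyticAt K logp x)
    (hlog_mul : ∀ x y : K, x ≠ 0 → y ≠ 0 → logp (x * y) = logp x + logp y)
    (hlog_p : logp (p : K) = 0)
    (hlog_series : ∀ x : K, ‖x - 1‖ < 1 →
      HasSum (fun n : ℕ => (-1) ^ n * (x - 1) ^ (n + 1) / (n + 1 : K)) (logp x))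
    (G : K → K)
    (hG : ∀ w : K, (1 < ‖w‖ ∨ (‖w‖ ≤ 1 ∧ ∀ n : ℤ, 1 ≤ ‖w - (n : K)‖)) →
      Tendsto (fun n : ℕ => ((p : K) ^ n)⁻¹ * ∑ j ∈ Finset.range (p ^ n),
          ((w + (j : K)) * (logp (w + (j : K)) - 1)))
        atTop (nhds (G w)))
    (x : K) (hx : 1 < ‖x‖ ∨ (‖x‖ ≤ 1 ∧ ∀ n : ℤ, 1 ≤ ‖x - (n : K)‖))
    (n : ℕ) (hn : 0 < n) :
    ∑ k ∈ Finset.range n, G ((x + (k : K)) / (n : K)) = G x - (x - 1 / 2) * logp (n : K) :=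
  diamond_distribution_on_Wp_general p K hiso logp hlog_mul hlog_series G hG x hx n hn
end
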